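/- There is no continuous map g : {0,1} × 2^ω → {0,1} × 2^ω reducing 𝔼₃ to 𝔼₅, where, for ℂ := P_∞ ⊆ 2^ω, 𝔼₃ is defined by (ε,α) 𝔼₃ (η,β) ⇔ (ε,α) = (η,β) ∨ (α = β ∈ ℂ), and 𝔼₅ is defined by (ε,α) 𝔼₅ (η,β) ⇔ (ε,α) = (η,β) ∨ (α = β ∈ ℂ) ∨ (ε = η ∧ α,β ∉ ℂ). -/

import Mathlib

/-- The set of binary sequences with infinitely many ones. -/
def Pinf : Set (ℕ → Bool) := {α | ∀ N : ℕ, ∃ n ≥ N, α n = true}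

/-- The equivalence relation 𝔼₃ on 2 × 2^ω (for ℂ = P_∞). -/
def E3 (p q : Bool × (ℕ → Bool)) : Prop := p = q ∨ (p.2 = q.2 ∧ p.2 ∈ Pinf)

/-- The equivalence relation 𝔼₅ on 2 × 2^ω (for ℂ = P_∞). -/
def E5 (p q : Bool × (ℕ → Bool)) : Prop :=
  p = q ∨ (p.2 = q.2 ∧ p.2 ∈ Pinf) ∨ (p.1 = q.1 ∧ p.2 ∉ Pinf ∧ q.2 ∉ Pinf)

/-!
Let `g` be a reduction of `𝔼₃` to `𝔼₅`. On a fixed side `ε`, two points sent outside `ℂ` with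
the same first coordinate are `𝔼₅`-related, hence `𝔼₃`-related, hence equal; so only finitely many `α`
have `g (ε, α)` outside `ℂ`. For every other `α`, the pair `(0, α)`, `(1, α)` is `𝔼₃`-related
exactly when `α ∈ ℂ`, and `𝔼₅`-related exactly when `g` sends both to the same point. Hence,
up to a finite set, `ℂ` coincides with the closed set where the second coordinates of
`g (0, ·)` and `g (1, ·)` agree. As `ℂ` is dense, that closed set together with the finite set
is everything, so `2^ω \ ℂ` would be finite, which it is not.
-/

open Set Filter

theorem dense_Pinf : Dense Pinf := by
  intro α
  let approx : ℕ → ℕ → Bool := fun m n => if n < m then α n else true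
  have h_mem : ∀ m, approx m ∈ Pinf := fun m N =>
    ⟨max N m, le_max_left N m, by simp [approx]⟩
  have h_tendsto : Tendsto approx atTop (nhds α) := by
    refine tendsto_pi_nhds.2 fun n => tendsto_const_nhds.congr' ?_
    filter_upwards [eventually_gt_atTop n] with m hm
    simp [approx, hm]
  exact mem_closure_of_tendsto h_tendsto (Eventually.of_forall h_mem)

theorem infinite_compl_Pinf : Pinfᶜ.Infinite := by
  refine infinite_of_injective_forall_mem (f := fun k n => decide (n < k)) ?_ ?_
  · intro k l hkl
    by_contra hne
    rcases Nat.lt_or_gt_of_ne hne with h | h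
    · simpa [h] using congrFun hkl k
    · simpa [h] using congrFun hkl l
  · intro k hk
    obtain ⟨n, hn, hlt⟩ := hk k
    simp only [decide_eq_true_eq] at hlt
    omega

def exceptionalSet (g : Bool × (ℕ → Bool) → Bool × (ℕ → Bool)) : Set (ℕ → Bool) :=
  {α | ∃ ε, (g (ε, α)).2 ∉ Pinf}

section Reduction

variable {g : Bool × (ℕ → Bool) → Bool × (ℕ → Bool)} (hred : ∀ p q, E3 p q ↔ E5 (g p) (g q))
include hred

theorem injOn_fst_of_reduction (ε : Bool) :
    InjOn (fun α => (g (ε, α)).1) {α | (g (ε, α)).2 ∉ Pinf} := by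
  intro α hα β hβ hcol
  rcases (hred _ _).2 (Or.inr (Or.inr ⟨hcol, hα, hβ⟩)) with h | h
  · exact congrArg Prod.snd h
  · exact h.1

theorem finite_exceptionalSet : (exceptionalSet g).Finite := by
  have h_eq : exceptionalSet g = ⋃ ε, {α | (g (ε, α)).2 ∉ Pinf} := by
    ext α
    simp [exceptionalSet]
  rw [h_eq]
  exact finite_iUnion fun ε =>
    (toFinite _).of_finite_image (injOn_fst_of_reduction hred ε)

theorem mem_Pinf_iff_of_notMem_exceptionalSet {α : ℕ → Bool} (hα : α ∉ exceptionalSet g) :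
    α ∈ Pinf ↔ (g (false, α)).2 = (g (true, α)).2 := by
  have h_good : ∀ ε, (g (ε, α)).2 ∈ Pinf := fun ε => by
    by_contra h
    exact hα ⟨ε, h⟩
  constructor
  · intro hP
    rcases (hred (false, α) (true, α)).1 (Or.inr ⟨rfl, hP⟩) with h | h | h
    · exact congrArg Prod.snd h
    · exact h.1
    · exact absurd (h_good false) h.2.1
  · intro heq
    rcases (hred _ _).2 (Or.inr (Or.inl ⟨heq, h_good false⟩)) with h | h
    · exact absurd (congrArg Prod.fst h) Bool.false_ne_true
    · exact h.2

end Reduction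

theorem no_continuous_reduction_E3_to_E5 :
    ¬ ∃ g : Bool × (ℕ → Bool) → Bool × (ℕ → Bool),
        Continuous g ∧ ∀ p q, (E3 p q ↔ E5 (g p) (g q)) := by
  rintro ⟨g, hg, hred⟩
  set D := {α | (g (false, α)).2 = (g (true, α)).2}
  have hD : IsClosed D := isClosed_eq (by fun_prop) (by fun_prop)
  have hfin := finite_exceptionalSet hred
  have h_cover : Pinf ⊆ D ∪ exceptionalSet g := fun α hα => by
    by_cases hexc : α ∈ exceptionalSet g
    · exact Or.inr hexc
    · exact Or.inl ((mem_Pinf_iff_of_notMem_exceptionalSet hred hexc).1 hα)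
  have h_univ : D ∪ exceptionalSet g = univ :=
    (hD.union hfin.isClosed).closure_eq ▸ (dense_Pinf.mono h_cover).closure_eq
  refine infinite_compl_Pinf (hfin.subset fun α hα => ?_)
  by_contra hexc
  have hαD : α ∈ D := (h_univ.symm ▸ mem_univ α : α ∈ D ∪ _).resolve_right hexc
  exact hα ((mem_Pinf_iff_of_notMem_exceptionalSet hred hexc).2 hαD)
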